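/- Shortest-path tree structure under the uniqueness assumption: assume the uniqueness assumption holds. Let v be a vertex with d(v) < ⊤, and let u, u' be vertices such that the shortest path to v visits u and the shortest path to v visits u'. Then the shortest path to u' visits u, or the shortest path to u visits u'. -/

import Mathlib

open scoped ENNReal

namespace SSSP

variable {V : Type*}

/-- The weight of a walk (a list of vertices): the sum of `w` over consecutive pairs.
A one-vertex walk has weight 0. -/
noncomputable def walkWeight (w : V → V → ℝ≥0∞) : List V → ℝ≥0∞
  | [] => 0
  | [_] => 0
  | a :: b :: p => w a b + walkWeight w (b :: p)

/-- `p` is a walk from `u` to `v`: a nonempty list beginning at `u` and ending at `v`. -/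
def IsWalk (u v : V) (p : List V) : Prop :=
  p ≠ [] ∧ p.head? = some u ∧ p.getLast? = some v

/-- The distance from `u` to `v`: the infimum of the weights of all walks from `u` to `v`. -/
noncomputable def dist (w : V → V → ℝ≥0∞) (u v : V) : ℝ≥0∞ :=
  ⨅ p : {p : List V // IsWalk u v p}, walkWeight w p.1

/-- The shortest path (from `s`) to `v` visits `u`. -/
def Visits (w : V → V → ℝ≥0∞) (s u v : V) : Prop :=
  dist w s u + dist w u v = dist w s v

/-- The uniqueness assumption: any two distinct walks starting from `s` with finite
weight have different weights. -/
def UniqueWeights (w : V → V → ℝ≥0∞) (s : V) : Prop :=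
  ∀ p q : List V, p ≠ [] → q ≠ [] → p.head? = some s → q.head? = some s →
    walkWeight w p ≠ ⊤ → walkWeight w q ≠ ⊤ → walkWeight w p = walkWeight w q → p = q

/-- The relaxation operator. -/
noncomputable def relax (w : V → V → ℝ≥0∞) (f : V → ℝ≥0∞) : V → ℝ≥0∞ :=
  fun v => min (f v) (⨅ u, f u + w u v)

end SSSP

/-!
Shortest walks exist: every walk can be shortcut to one of length at most `card V` without
increasing its weight, and there are finitely many of those. If the shortest path to `v` visits
`u`, a shortest walk to `u` followed by a shortest walk from `u` to `v` has weight `d v`, so by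
uniqueness it is the shortest walk `P` to `v`. Hence shortest walks to `u` and `u'` are both
prefixes of `P`, so one extends the other, and the extending piece is a walk between them that
realises the visiting relation.
-/

theorem List.exists_eq_append_cons_append_cons_of_not_nodup {α : Type*} {l : List α}
    (h : ¬l.Nodup) : ∃ l₁ x l₂ l₃, l = l₁ ++ x :: (l₂ ++ x :: l₃) := by
  obtain ⟨x, hx⟩ := not_forall_not.mp (mt List.nodup_iff_sublist.mpr h)
  obtain ⟨r₁, r₂, rfl, hx₁, hx₂⟩ := List.cons_sublist_iff.mp hx
  obtain ⟨l₁, l₂, rfl⟩ := List.append_of_mem hx₁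
  obtain ⟨l₂', l₃, rfl⟩ := List.append_of_mem (List.singleton_sublist.mp hx₂)
  exact ⟨l₁, x, l₂ ++ l₂', l₃, by simp⟩

namespace SSSP

variable {V : Type*}

theorem walkWeight_append_cons (w : V → V → ℝ≥0∞) (x : V) (q : List V) :
    ∀ p : List V, walkWeight w (p ++ x :: q) = walkWeight w (p ++ [x]) + walkWeight w (x :: q)
  | [] => by simp [walkWeight]
  | [a] => by cases q <;> simp [walkWeight]
  | a :: b :: p => by
    simp only [List.cons_append, walkWeight]
    rw [← List.cons_append, walkWeight_append_cons w x q (b :: p), List.cons_append, add_assoc]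

theorem walkWeight_shortcut_le (w : V → V → ℝ≥0∞) (l₁ l₂ l₃ : List V) (x : V) :
    walkWeight w (l₁ ++ x :: l₃) ≤ walkWeight w (l₁ ++ x :: (l₂ ++ x :: l₃)) := by
  rw [walkWeight_append_cons w x l₃ l₁, walkWeight_append_cons w x (l₂ ++ x :: l₃) l₁,
    ← List.cons_append, walkWeight_append_cons w x l₃ (x :: l₂)]
  gcongr
  exact le_add_self

namespace IsWalk

variable {a b c : V} {p q : List V}

theorem exists_eq_append (hp : IsWalk a b p) : ∃ p', p = p' ++ [b] :=
  ⟨p.dropLast, (List.dropLast_append_getLast? b hp.2.2).symm⟩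

theorem exists_eq_cons (hp : IsWalk a b p) : ∃ p', p = a :: p' := by
  cases p with
  | nil => exact absurd rfl hp.1
  | cons x p' => exact ⟨p', by simpa using hp.2.1⟩

theorem append_tail (hp : IsWalk a b p) (hq : IsWalk b c q) : IsWalk a c (p ++ q.tail) := by
  obtain ⟨p', rfl⟩ := hp.exists_eq_append
  obtain ⟨q', rfl⟩ := hq.exists_eq_cons
  obtain ⟨-, ha, -⟩ := hp
  obtain ⟨-, -, hc⟩ := hq
  refine ⟨by simp, ?_, ?_⟩
  · cases p' <;> simp_all
  · simpa [List.getLast?_append] using hc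

theorem walkWeight_append_tail (w : V → V → ℝ≥0∞) (hp : IsWalk a b p) (hq : IsWalk b c q) :
    walkWeight w (p ++ q.tail) = walkWeight w p + walkWeight w q := by
  obtain ⟨p', rfl⟩ := hp.exists_eq_append
  obtain ⟨q', rfl⟩ := hq.exists_eq_cons
  rw [List.tail_cons, List.append_assoc, List.singleton_append, walkWeight_append_cons]

theorem shortcut {l₁ l₂ l₃ : List V} {x : V} (h : IsWalk a b (l₁ ++ x :: (l₂ ++ x :: l₃))) :
    IsWalk a b (l₁ ++ x :: l₃) := by
  obtain ⟨-, ha, hb⟩ := h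
  refine ⟨by simp, ?_, ?_⟩
  · cases l₁ <;> simp_all
  · rw [List.getLast?_append_of_ne_nil _ (List.cons_ne_nil _ _)]
    rwa [List.getLast?_append_of_ne_nil _ (List.cons_ne_nil _ _), ← List.cons_append,
      List.getLast?_append_of_ne_nil _ (List.cons_ne_nil _ _)] at hb

end IsWalk

theorem dist_le_walkWeight (w : V → V → ℝ≥0∞) {u v : V} {p : List V} (h : IsWalk u v p) :
    dist w u v ≤ walkWeight w p :=
  iInf_le (fun q : {p : List V // IsWalk u v p} => walkWeight w q.1) ⟨p, h⟩

theorem dist_triangle (w : V → V → ℝ≥0∞) (a b c : V) :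
    dist w a c ≤ dist w a b + dist w b c := by
  calc dist w a c
      ≤ ⨅ (p : {p // IsWalk a b p}) (q : {q // IsWalk b c q}),
          walkWeight w p.1 + walkWeight w q.1 :=
        le_iInf₂ fun p q =>
          p.2.walkWeight_append_tail w q.2 ▸ dist_le_walkWeight w (p.2.append_tail q.2)
    _ = dist w a b + dist w b c := by
      simp only [dist]
      rw [ENNReal.iInf_add]
      simp only [ENNReal.add_iInf]

theorem exists_isWalk_length_le_card [Fintype V] (w : V → V → ℝ≥0∞) {a b : V} {p : List V}
    (hp : IsWalk a b p) :
    ∃ q, IsWalk a b q ∧ q.length ≤ Fintype.card V ∧ walkWeight w q ≤ walkWeight w p := by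
  by_cases hnd : p.Nodup
  · exact ⟨p, hp, hnd.length_le_card, le_rfl⟩
  obtain ⟨l₁, x, l₂, l₃, rfl⟩ := List.exists_eq_append_cons_append_cons_of_not_nodup hnd
  obtain ⟨q, hq, hlen, hle⟩ := exists_isWalk_length_le_card w hp.shortcut
  exact ⟨q, hq, hlen, hle.trans (walkWeight_shortcut_le w l₁ l₂ l₃ x)⟩
termination_by p.length
decreasing_by subst_vars; simp

def IsShortestWalk (w : V → V → ℝ≥0∞) (u v : V) (p : List V) : Prop :=
  IsWalk u v p ∧ walkWeight w p = dist w u v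

theorem exists_isShortestWalk [Fintype V] (w : V → V → ℝ≥0∞) (a b : V) :
    ∃ p, IsShortestWalk w a b p := by
  set S : Set (List V) := {q | IsWalk a b q ∧ q.length ≤ Fintype.card V}
  have hS : S.Finite := (List.finite_length_le V _).subset fun q hq => hq.2
  have hSne : S.Nonempty := by
    obtain ⟨q, hq, hlen, -⟩ :=
      exists_isWalk_length_le_card w (show IsWalk a b [a, b] by simp [IsWalk])
    exact ⟨q, hq, hlen⟩
  obtain ⟨p, hpS, hmin⟩ := Set.exists_min_image S (walkWeight w) hS hSne
  refine ⟨p, hpS.1, le_antisymm (le_iInf fun r => ?_) (dist_le_walkWeight w hpS.1)⟩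
  obtain ⟨q, hq, hlen, hle⟩ := exists_isWalk_length_le_card w r.2
  exact (hmin q ⟨hq, hlen⟩).trans hle

theorem visits_of_isPrefix {w : V → V → ℝ≥0∞} {s u u' : V} {P Q : List V}
    (hP : IsShortestWalk w s u P) (hQ : IsShortestWalk w s u' Q) (hPQ : P <+: Q) :
    Visits w s u u' := by
  obtain ⟨r, rfl⟩ := hPQ
  obtain ⟨P', rfl⟩ := hP.1.exists_eq_append
  have hr : IsWalk u u' (u :: r) :=
    ⟨by simp, by simp, by simpa [List.getLast?_append] using hQ.1.2.2⟩
  refine le_antisymm ?_ (dist_triangle w s u u')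
  calc dist w s u + dist w u u'
      ≤ walkWeight w (P' ++ [u]) + walkWeight w (u :: r) := by
        rw [hP.2]; gcongr; exact dist_le_walkWeight w hr
    _ = dist w s u' := by rw [← walkWeight_append_cons, ← hQ.2]; simp

theorem UniqueWeights.eq_of_isWalk {w : V → V → ℝ≥0∞} {s a b : V} {p q : List V}
    (huniq : UniqueWeights w s) (hp : IsWalk s a p) (hq : IsWalk s b q) (hfin : walkWeight w p ≠ ⊤)
    (heq : walkWeight w p = walkWeight w q) : p = q :=
  huniq p q hp.1 hq.1 hp.2.1 hq.2.1 hfin (heq ▸ hfin) heq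

theorem IsShortestWalk.isPrefix_of_visits [Fintype V] {w : V → V → ℝ≥0∞} {s u v : V}
    {P P₁ : List V}
    (huniq : UniqueWeights w s) (hfin : dist w s v ≠ ⊤) (hP : IsShortestWalk w s v P)
    (hP₁ : IsShortestWalk w s u P₁) (hu : Visits w s u v) : P₁ <+: P := by
  obtain ⟨P₂, hP₂⟩ := exists_isShortestWalk w u v
  have hweight : walkWeight w (P₁ ++ P₂.tail) = dist w s v := by
    rw [hP₁.1.walkWeight_append_tail w hP₂.1, hP₁.2, hP₂.2, hu]
  exact ⟨P₂.tail, huniq.eq_of_isWalk (hP₁.1.append_tail hP₂.1) hP.1 (hweight ▸ hfin)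
    (hweight.trans hP.2.symm)⟩

end SSSP

namespace SSSP

/-- Shortest-path tree structure under the uniqueness assumption: two vertices visited
by the shortest path to `v` are comparable in the visiting relation. -/
theorem visits_comparable {V : Type*} [Fintype V] (w : V → V → ℝ≥0∞) (s : V)
    (huniq : UniqueWeights w s) (v u u' : V)
    (hfin : dist w s v < ⊤)
    (hu : Visits w s u v) (hu' : Visits w s u' v) :
    Visits w s u u' ∨ Visits w s u' u := by
  obtain ⟨P, hP⟩ := exists_isShortestWalk w s v
  obtain ⟨P₁, hP₁⟩ := exists_isShortestWalk w s u
  obtain ⟨Q₁, hQ₁⟩ := exists_isShortestWalk w s u'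
  rcases List.prefix_or_prefix_of_prefix (hP.isPrefix_of_visits huniq hfin.ne hP₁ hu)
      (hP.isPrefix_of_visits huniq hfin.ne hQ₁ hu') with h | h
  · exact .inl (visits_of_isPrefix hP₁ hQ₁ h)
  · exact .inr (visits_of_isPrefix hQ₁ hP₁ h)

end SSSP
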